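/- arXiv:1703.05226 — 4 statements merged into one kernel-verified Lean document; each statement's English description precedes it below -/
import Mathlib

section
/- Let r ≥ 1 and let S be a finite nonempty subset of ℤ^r. Then 0 lies in the interior of the convex hull (taken in ℝ^r) of S if and only if for every nonzero λ ∈ ℤ^r there exists s ∈ S with ⟨λ, s⟩ < 0, where ⟨λ, s⟩ = Σ_j λ_j s_j. -/
/-!
By separation in `ℝ^r`, `0 ∉ interior (conv S)` exactly when some nonzero real `x` pairs
nonnegatively with all of `S`. Such an `x` can be made integral by induction on the number
of `s ∈ S` with `x ⬝ s > 0`: the integer vectors `s` with `x ⬝ s = 0` have a nonzero real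
common orthogonal, namely `x`, hence also a nonzero integral one `l`. Either `l` or `-l` already
works, or moving `x` along `l` until the first positive pairing vanishes keeps it nonzero and
nonnegative on `S` while strictly shrinking the set of positive pairings.
-/

open Matrix Finset Filter Topology

theorem Int.cast_dotProduct {n R : Type*} [Fintype n] [NonAssocRing R] (v w : n → ℤ) :
    ((v ⬝ᵥ w : ℤ) : R) = (Int.cast ∘ v) ⬝ᵥ (Int.cast ∘ w) :=
  (Int.castRingHom R).map_dotProduct v w

theorem Matrix.exists_ne_zero_mulVec_eq_zero_of_map {R S m n : Type*} [CommRing R] [CommRing S]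
    [Algebra R S] [FaithfulSMul R S] [IsDomain S] [Finite m] [Fintype n] (A : Matrix m n R)
    {x : n → S} (hx : x ≠ 0) (hAx : A.map (algebraMap R S) *ᵥ x = 0) :
    ∃ y : n → R, y ≠ 0 ∧ A *ᵥ y = 0 := by
  simp only [mulVec_eq_sum, op_smul_eq_smul] at hAx ⊢
  have hdep : ¬ LinearIndependent S fun j => algebraMap R S ∘ fun i => A i j := by
    obtain ⟨j, hj⟩ := Function.ne_iff.mp hx
    exact Fintype.not_linearIndependent_iff.2 ⟨x, hAx, j, hj⟩
  rw [linearIndependent_algebraMap_comp_iff, Fintype.not_linearIndependent_iff] at hdep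
  obtain ⟨y, hy, j, hj⟩ := hdep
  exact ⟨y, fun h => hj (congrFun h j), hy⟩

theorem exists_pos_forall_add_mul_nonneg {𝕜 ι : Type*} [Field 𝕜] [LinearOrder 𝕜]
    [IsStrictOrderedRing 𝕜] {S : Finset ι} {a b : ι → 𝕜} (ha : ∀ i ∈ S, 0 ≤ a i)
    (hab : ∀ i ∈ S, a i = 0 → b i = 0) (hb : ∃ i ∈ S, b i < 0) :
    ∃ t > 0, (∀ i ∈ S, 0 ≤ a i + t * b i) ∧ ∃ i ∈ S, 0 < a i ∧ a i + t * b i = 0 := by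
  have hneg : (S.filter fun i => b i < 0).Nonempty := by simpa [filter_nonempty_iff]
  have pos_of_neg {i} (hi : i ∈ S.filter fun i => b i < 0) : 0 < a i := by
    rw [mem_filter] at hi
    exact (ha i hi.1).lt_of_ne fun h => hi.2.ne (hab i hi.1 h.symm)
  obtain ⟨k, hk, hmin⟩ := exists_min_image _ (fun i => a i / -b i) hneg
  have hbk : b k < 0 := (mem_filter.1 hk).2
  have ht : 0 < a k / -b k := div_pos (pos_of_neg hk) (neg_pos.2 hbk)
  refine ⟨a k / -b k, ht, fun i hi => ?_, k, (mem_filter.1 hk).1, pos_of_neg hk, ?_⟩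
  · rcases le_or_gt 0 (b i) with hbi | hbi
    · exact add_nonneg (ha i hi) (mul_nonneg ht.le hbi)
    · have := hmin i (mem_filter.2 ⟨hi, hbi⟩)
      rw [le_div_iff₀ (neg_pos.2 hbi)] at this
      linarith
  · rw [div_neg, neg_mul, div_mul_cancel₀ _ hbk.ne, add_neg_cancel]

theorem exists_int_dotProduct_nonneg_of_real {n : Type*} [Fintype n] (S : Finset (n → ℤ))
    {x : n → ℝ} (hx : x ≠ 0) (hxS : ∀ s ∈ S, 0 ≤ x ⬝ᵥ (Int.cast ∘ s)) :
    ∃ l : n → ℤ, l ≠ 0 ∧ ∀ s ∈ S, 0 ≤ l ⬝ᵥ s := by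
  induction hk : #{s ∈ S | 0 < x ⬝ᵥ (Int.cast ∘ s)} using Nat.strong_induction_on
    generalizing x with
  | _ k ih =>
  obtain ⟨l, hl, hlT⟩ :
      ∃ l : n → ℤ, l ≠ 0 ∧ ∀ s ∈ S, x ⬝ᵥ (Int.cast ∘ s) = 0 → l ⬝ᵥ s = 0 := by
    let T := {s ∈ S | x ⬝ᵥ (Int.cast ∘ s) = 0}
    obtain ⟨l, hl, hTl⟩ :=
      (Matrix.of fun (s : T) j => s.1 j).exists_ne_zero_mulVec_eq_zero_of_map hx <|
        funext fun s => by
          simpa [mulVec, dotProduct_comm, Function.comp_def] using (mem_filter.1 s.2).2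
    refine ⟨l, hl, fun s hs hxs => ?_⟩
    simpa [mulVec, dotProduct_comm, Function.comp_def] using
      congrFun hTl ⟨s, mem_filter.2 ⟨hs, hxs⟩⟩
  by_cases hpos : ∀ s ∈ S, 0 ≤ l ⬝ᵥ s
  · exact ⟨l, hl, hpos⟩
  by_cases hneg : ∀ s ∈ S, l ⬝ᵥ s ≤ 0
  · exact ⟨-l, neg_ne_zero.2 hl, fun s hs => by simpa [neg_dotProduct] using hneg s hs⟩
  push Not at hpos hneg
  obtain ⟨sp, hsp, hlsp⟩ := hneg
  obtain ⟨t, ht, hnonneg, s₀, hs₀, hxs₀, hx's₀⟩ :=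
    exists_pos_forall_add_mul_nonneg (S := S) (a := fun s => x ⬝ᵥ (Int.cast ∘ s))
      (b := fun s => ((l ⬝ᵥ s : ℤ) : ℝ)) hxS (fun s hs h => by simp [hlT s hs h])
      (by simpa using hpos)
  set x' := x + t • (Int.cast ∘ l : n → ℝ)
  have hx' (s : n → ℤ) : x' ⬝ᵥ (Int.cast ∘ s) = x ⬝ᵥ (Int.cast ∘ s) + t * (l ⬝ᵥ s : ℤ) := by
    rw [Int.cast_dotProduct, add_dotProduct, smul_dotProduct, smul_eq_mul]
  refine ih _ ?_ (x := x') ?_ (fun s hs => hx' s ▸ hnonneg s hs) rfl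
  · rw [← hk]
    refine card_lt_card ⟨fun s hs => ?_, fun hsub => ?_⟩
    · rw [mem_filter, hx'] at hs
      rw [mem_filter]
      refine ⟨hs.1, (hxS s hs.1).lt_of_ne fun h => ?_⟩
      simp [← h, hlT s hs.1 h.symm] at hs
    · have := (mem_filter.1 (hsub (mem_filter.2 ⟨hs₀, hxs₀⟩))).2
      rw [hx'] at this
      exact this.ne' hx's₀
  · intro hx'0
    have := hx' sp
    rw [hx'0, zero_dotProduct] at this
    have : (0 : ℝ) < l ⬝ᵥ sp := by exact_mod_cast hlsp
    nlinarith [hxS sp hsp]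

theorem Convex.exists_dual_ne_zero_nonneg_of_zero_notMem_interior {E : Type*}
    [NormedAddCommGroup E] [NormedSpace ℝ E] [FiniteDimensional ℝ E] {K : Set E}
    (hK : Convex ℝ K) (hne : K.Nonempty) (h0 : (0 : E) ∉ interior K) :
    ∃ f : Module.Dual ℝ E, f ≠ 0 ∧ ∀ y ∈ K, 0 ≤ f y := by
  rcases (interior K).eq_empty_or_nonempty with hint | ⟨a, ha⟩
  · -- `K` spans a proper affine subspace, and a functional killing its direction is constant on `K`
    obtain ⟨a, ha⟩ := hne
    have hdir : (affineSpan ℝ K).direction ≠ ⊤ := by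
      rw [Ne, AffineSubspace.direction_eq_top_iff_of_nonempty ⟨a, subset_affineSpan ℝ K ha⟩,
        ← hK.interior_nonempty_iff_affineSpan_eq_top, hint]
      exact Set.not_nonempty_empty
    obtain ⟨f, hf, hfdir⟩ := Submodule.exists_dual_map_eq_bot_of_lt_top hdir.lt_top inferInstance
    have hconst : ∀ y ∈ K, f y = f a := fun y hy => by
      have := Submodule.mem_map_of_mem (f := f) (AffineSubspace.vsub_mem_direction
        (subset_affineSpan ℝ K hy) (subset_affineSpan ℝ K ha))
      rwa [hfdir, Submodule.mem_bot, vsub_eq_sub, map_sub, sub_eq_zero] at this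
    rcases le_total 0 (f a) with hfa | hfa
    · exact ⟨f, hf, fun y hy => hconst y hy ▸ hfa⟩
    · exact ⟨-f, neg_ne_zero.2 hf, fun y hy => by simp [hconst y hy, hfa]⟩
  · obtain ⟨f, hf⟩ := geometric_hahn_banach_open_point hK.interior isOpen_interior h0
    have hle : K ⊆ {y | f y ≤ 0} :=
      calc K ⊆ closure K := subset_closure
        _ = closure (interior K) :=
          (hK.closure_interior_eq_closure_of_nonempty_interior ⟨a, ha⟩).symm
        _ ⊆ {y | f y ≤ 0} := closure_minimal (fun y hy => by simpa using (hf y hy).le)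
          (isClosed_le f.continuous continuous_const)
    refine ⟨-(f : E →ₗ[ℝ] ℝ), fun h => ?_, fun y hy => by simpa using hle hy⟩
    have hfa : f a = 0 := by simpa using LinearMap.congr_fun (neg_eq_zero.1 h) a
    simpa [hfa] using hf a ha

theorem exists_neg_of_zero_mem_interior {E : Type*} [AddCommGroup E] [Module ℝ E]
    [TopologicalSpace E] [ContinuousSMul ℝ E] {K : Set E} (h0 : (0 : E) ∈ interior K)
    {f : Module.Dual ℝ E} (hf : f ≠ 0) : ∃ y ∈ K, f y < 0 := by
  obtain ⟨v, hv⟩ := DFunLike.ne_iff.mp hf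
  set w := -f v • v
  have hfw : f w < 0 := by simpa [w] using mul_self_pos.2 hv
  have hsmul : ∀ᶠ t in 𝓝[>] (0 : ℝ), t • w ∈ K :=
    (((continuous_id.smul continuous_const).tendsto' 0 0 (zero_smul ℝ w)).mono_left
      nhdsWithin_le_nhds).eventually (mem_interior_iff_mem_nhds.1 h0)
  obtain ⟨t, htK, ht⟩ := (hsmul.and self_mem_nhdsWithin).exists
  exact ⟨t • w, htK, by simpa using mul_neg_of_pos_of_neg ht hfw⟩

theorem zero_mem_interior_convexHull_iff {E : Type*} [NormedAddCommGroup E] [NormedSpace ℝ E]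
    [FiniteDimensional ℝ E] {A : Set E} (hA : A.Nonempty) :
    (0 : E) ∈ interior (convexHull ℝ A) ↔ ∀ f : Module.Dual ℝ E, f ≠ 0 → ∃ a ∈ A, f a < 0 := by
  constructor
  · intro h0 f hf
    by_contra! hA
    obtain ⟨y, hy, hfy⟩ := exists_neg_of_zero_mem_interior h0 hf
    exact hfy.not_ge (convexHull_min hA (convex_halfSpace_ge f.isLinear 0) hy)
  · intro h
    by_contra h0
    obtain ⟨f, hf, hfA⟩ :=
      (convex_convexHull ℝ A).exists_dual_ne_zero_nonneg_of_zero_notMem_interior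
        (hA.mono (subset_convexHull ℝ A)) h0
    obtain ⟨a, ha, hfa⟩ := h f hf
    exact hfa.not_ge (hfA a (subset_convexHull ℝ A ha))

theorem stmt3_general (r : ℕ) (S : Finset (Fin r → ℤ)) (hS : S.Nonempty) :
    (0 : Fin r → ℝ) ∈
        interior (convexHull ℝ ((fun s : Fin r → ℤ => fun j => (s j : ℝ)) '' (S : Set (Fin r → ℤ)))) ↔
      ∀ l : Fin r → ℤ, l ≠ 0 → ∃ s ∈ S, ∑ j, l j * s j < 0 := by
  rw [zero_mem_interior_convexHull_iff (hS.to_set.image _)]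
  constructor
  · intro h l hl
    have hcast : (Int.cast ∘ l : Fin r → ℝ) ≠ 0 := fun h0 =>
      hl (funext fun j => by simpa using congrFun h0 j)
    obtain ⟨_, ⟨s, hs, rfl⟩, hls⟩ := h _ ((dotProductEquiv ℝ (Fin r)).map_ne_zero_iff.2 hcast)
    refine ⟨s, hs, ?_⟩
    change (Int.cast ∘ l) ⬝ᵥ (Int.cast ∘ s) < (0 : ℝ) at hls
    rw [← Int.cast_dotProduct] at hls
    exact_mod_cast hls
  · intro h f hf
    by_contra! hfS
    rw [← (dotProductEquiv ℝ (Fin r)).apply_symm_apply f] at hf hfS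
    obtain ⟨l, hl, hlS⟩ := exists_int_dotProduct_nonneg_of_real S
      ((LinearEquiv.map_ne_zero_iff _).1 hf) fun s hs => hfS _ ⟨s, hs, rfl⟩
    obtain ⟨s, hs, hls⟩ := h l hl
    exact hls.not_ge (hlS s hs)

/-- Hilbert–Mumford criterion for stability tested against integral one-parameter
subgroups: for a finite nonempty `S ⊆ ℤ^r`, `0` lies in the interior of the real
convex hull of `S` iff every nonzero integral `λ` pairs strictly negatively with
some element of `S`. -/
theorem stmt3 (r : ℕ) (hr : 1 ≤ r) (S : Finset (Fin r → ℤ)) (hS : S.Nonempty) :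
    (0 : Fin r → ℝ) ∈
        interior (convexHull ℝ ((fun s : Fin r → ℤ => fun j => (s j : ℝ)) '' (S : Set (Fin r → ℤ)))) ↔
      ∀ l : Fin r → ℤ, l ≠ 0 → ∃ s ∈ S, ∑ j, l j * s j < 0 :=
  stmt3_general r S hS
end

section
/- Let k be an infinite field, let n, r ≥ 1, and let α_0, …, α_{n−1} ∈ ℤ^r. Let the torus T = (kˣ)^r act on k[x_0, …, x_{n−1}] by k-algebra automorphisms with t · x_i = (∏_{j=1}^r t_j^{α_i(j)}) x_i. Let x = (x_0, …, x_{n−1}) ∈ k^n be a nonzero point. Then there exists a T-invariant homogeneous polynomial f of degree ≥ 1 with f(x) ≠ 0 if and only if 0 lies in the convex hull in ℝ^r of the finite set {α_i : x_i ≠ 0}. -/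
/-!
By comparing coefficients, a polynomial is fixed by `t` exactly when every monomial `x^m` in its
support is, and since `k` is infinite a monomial is fixed by the whole torus exactly when its weight
`∑ m_i α_i` vanishes. Evaluating at `x` selects a monomial supported on `{i | x i ≠ 0}`, so a
semistability witness exists iff some nonzero `m : ℕ^n` supported there has weight zero, i.e. iff
`0` is a nonnegative rational combination, with weights summing to 1, of those `α_i`.

It remains to pass from real to rational weights. By Carathéodory's theorem we may take the points
carrying the real weights affinely independent, so that these weights are the unique solution of a
linear system with rational coefficients. Applying a `ℚ`-linear retraction `ℝ → ℚ` to them gives a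
rational solution of the same system, hence the real weights were rational already.
-/

open MvPolynomial Finsupp

theorem Finset.prod_zpow_eq_zpow_sum {G ι : Type*} [CommGroup G] (s : Finset ι) (f : ι → ℤ)
    (a : G) : ∏ i ∈ s, a ^ f i = a ^ ∑ i ∈ s, f i := by
  classical
  induction s using Finset.induction_on with
  | empty => simp
  | insert i s hi ih => rw [prod_insert hi, sum_insert hi, zpow_add, ih]

theorem prod_pow_prod_zpow_eq_prod_zpow_weight {G σ κ : Type*} [CommGroup G] [Fintype κ]
    (t : κ → G) (α : σ → κ → ℤ) (m : σ →₀ ℕ) :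
    (m.prod fun i e => (∏ j, t j ^ α i j) ^ e) = ∏ j, t j ^ weight α m j := by
  simp only [weight_apply, Finsupp.sum, Finsupp.prod, Finset.sum_apply, Pi.smul_apply,
    ← Finset.prod_zpow_eq_zpow_sum]
  rw [Finset.prod_comm]
  refine Finset.prod_congr rfl fun i _ => ?_
  rw [← Finset.prod_pow]
  refine Finset.prod_congr rfl fun j _ => ?_
  rw [← zpow_natCast, ← zpow_mul, nsmul_eq_mul, mul_comm]

theorem eq_zero_of_forall_zpow_eq_one {K : Type*} [Field K] [Infinite K] {c : ℤ}
    (h : ∀ u : Kˣ, u ^ c = 1) : c = 0 := by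
  classical
  by_contra hc
  have hroots : {a : K | a ≠ 0} ⊆ (Polynomial.nthRoots c.natAbs (1 : K)).toFinset := by
    intro a (ha : a ≠ 0)
    rw [Finset.mem_coe, Multiset.mem_toFinset, Polynomial.mem_nthRoots (Int.natAbs_pos.2 hc)]
    simpa using congrArg Units.val (pow_natAbs_eq_one.2 (h (Units.mk0 a ha)))
  exact (Set.finite_singleton (0 : K)).infinite_compl ((Finset.finite_toSet _).subset hroots)

theorem eq_zero_of_forall_prod_zpow_eq_one {K κ : Type*} [Field K] [Infinite K] [Fintype κ]
    {a : κ → ℤ} (h : ∀ t : κ → Kˣ, ∏ j, t j ^ a j = 1) : a = 0 := by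
  classical
  funext j
  refine eq_zero_of_forall_zpow_eq_one (K := K) fun u => ?_
  simpa [Pi.mulSingle_apply, apply_ite (· ^ a _)] using h (Pi.mulSingle j u)

theorem MvPolynomial.coeff_aeval_smul_X {R σ : Type*} [CommSemiring R] (c : σ → R)
    (f : MvPolynomial σ R) (m : σ →₀ ℕ) :
    coeff m (aeval (fun i => c i • X i) f) = (m.prod fun i e => c i ^ e) * coeff m f := by
  classical
  induction f using MvPolynomial.induction_on' with
  | monomial m' a =>
    have haeval : aeval (fun i => c i • X i) (monomial m' a) =
        monomial m' ((m'.prod fun i e => c i ^ e) * a) := by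
      rw [aeval_monomial, monomial_eq]
      simp only [smul_eq_C_mul, mul_pow, Finsupp.prod_mul, ← map_pow, ← map_finsuppProd, map_mul,
        algebraMap_eq]
      ring
    rw [haeval, coeff_monomial, coeff_monomial]
    split_ifs with h
    · rw [h]
    · simp
  | add p q hp hq => rw [map_add, coeff_add, coeff_add, hp, hq, mul_add]

theorem MvPolynomial.aeval_smul_X_eq_self_iff {R σ : Type*} [CommRing R] [IsDomain R]
    (c : σ → R) (f : MvPolynomial σ R) :
    aeval (fun i => c i • X i) f = f ↔ ∀ m, coeff m f ≠ 0 → (m.prod fun i e => c i ^ e) = 1 := by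
  rw [MvPolynomial.ext_iff]
  refine forall_congr' fun m => ?_
  rw [coeff_aeval_smul_X, mul_left_eq_self₀, or_iff_not_imp_right, ne_eq]

theorem aeval_torus_eq_self_iff_isWeightedHomogeneous {K σ κ : Type*} [Field K] [Infinite K]
    [Fintype κ] (α : σ → κ → ℤ) (f : MvPolynomial σ K) :
    (∀ t : κ → Kˣ, aeval (fun i => ((∏ j, t j ^ α i j : Kˣ) : K) • X i) f = f) ↔
      IsWeightedHomogeneous α f 0 := by
  have hchar : ∀ (t : κ → Kˣ) (m : σ →₀ ℕ),
      (m.prod fun i e => ((∏ j, t j ^ α i j : Kˣ) : K) ^ e) = 1 ↔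
        ∏ j, t j ^ weight α m j = 1 := fun t m => by
    rw [← prod_pow_prod_zpow_eq_prod_zpow_weight, ← Units.val_eq_one, ← Units.coeHom_apply,
      map_finsuppProd]
    simp
  simp only [aeval_smul_X_eq_self_iff, hchar]
  exact ⟨fun h m hm => eq_zero_of_forall_prod_zpow_eq_one fun t => h t m hm,
    fun h t m hm => by simp [h hm]⟩

theorem exists_isHomogeneous_isWeightedHomogeneous_eval_ne_zero_iff {R σ M : Type*} [CommRing R]
    [IsDomain R] [AddCommMonoid M] (w : σ → M) (x : σ → R) :
    (∃ f : MvPolynomial σ R, ∃ d : ℕ, 1 ≤ d ∧ f.IsHomogeneous d ∧ IsWeightedHomogeneous w f 0 ∧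
        eval x f ≠ 0) ↔
      ∃ m : σ →₀ ℕ, m ≠ 0 ∧ ↑m.support ⊆ {i | x i ≠ 0} ∧ weight w m = 0 := by
  constructor
  · rintro ⟨f, d, hd, hhom, hw, hfx⟩
    rw [eval_eq] at hfx
    obtain ⟨m, -, hm⟩ := Finset.exists_ne_zero_of_sum_ne_zero hfx
    have hcoeff : coeff m f ≠ 0 := left_ne_zero_of_mul hm
    refine ⟨m, ?_, fun i hi hxi => right_ne_zero_of_mul hm ?_, hw hcoeff⟩
    · rintro rfl
      have hd0 := hhom hcoeff
      rw [map_zero] at hd0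
      omega
    · exact Finset.prod_eq_zero hi (by rw [hxi, zero_pow (mem_support_iff.1 hi)])
  · rintro ⟨m, hm, hmx, hmw⟩
    refine ⟨monomial m 1, degree m, Nat.one_le_iff_ne_zero.2 ((degree_eq_zero_iff m).not.2 hm),
      isHomogeneous_monomial _ rfl, isWeightedHomogeneous_monomial _ _ _ hmw, ?_⟩
    rw [eval_monomial, one_mul]
    exact Finset.prod_ne_zero_iff.2 fun i hi => pow_ne_zero _ (hmx hi)

theorem exists_linearMap_leftInverse_algebraMap (F K : Type*) [Field F] [Field K] [Algebra F K] :
    ∃ φ : K →ₗ[F] F, ∀ a, φ (algebraMap F K a) = a := by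
  obtain ⟨φ, hφ⟩ := LinearMap.exists_leftInverse_of_injective (Algebra.linearMap F K)
    (LinearMap.ker_eq_bot.2 (algebraMap F K).injective)
  exact ⟨φ, LinearMap.congr_fun hφ⟩

theorem AffineIndependent.mem_range_algebraMap_of_sum_smul_eq {F K ι κ : Type*} [Field F]
    [Field K] [Algebra F K] [Fintype ι] {z : ι → κ → K} (hz : AffineIndependent K z)
    (hzF : ∀ i j, z i j ∈ Set.range (algebraMap F K)) {p : κ → K}
    (hpF : ∀ j, p j ∈ Set.range (algebraMap F K)) {w : ι → K} (hw₁ : ∑ i, w i = 1)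
    (hwp : ∑ i, w i • z i = p) (i : ι) : w i ∈ Set.range (algebraMap F K) := by
  obtain ⟨φ, hφ⟩ := exists_linearMap_leftInverse_algebraMap F K
  have hφ_mul : ∀ a b, φ (a * algebraMap F K b) = φ a * b := fun a b => by
    rw [mul_comm, ← Algebra.smul_def, map_smul, smul_eq_mul, mul_comm]
  -- `φ` fixes the coefficients of the system, so it maps the solution `w` to another solution `q`
  set q : ι → K := fun i => algebraMap F K (φ (w i))
  have hq₁ : ∑ i, q i = 1 := by
    simp only [q, ← map_sum, hw₁, ← map_one (algebraMap F K), hφ]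
  have hqp : ∑ i, q i • z i = p := by
    funext j
    obtain ⟨b, hb⟩ := hpF j
    have hj := congrFun hwp j
    choose a ha using fun i => hzF i j
    simp only [Finset.sum_apply, Pi.smul_apply, smul_eq_mul, ← ha, ← hb] at hj ⊢
    simp only [q, ← map_mul, ← hφ_mul, ← map_sum, hj, hφ]
  have hwq := hz.eq_zero_of_sum_eq_zero (s := Finset.univ) (w := w - q)
    (by simp [Finset.sum_sub_distrib, hw₁, hq₁])
    (by simp [sub_smul, Finset.sum_sub_distrib, hwp, hqp]) i (Finset.mem_univ i)
  exact ⟨φ (w i), (sub_eq_zero.1 hwq).symm⟩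

theorem exists_nat_eq_mul_of_nonneg {ι : Type*} [Fintype ι] {q : ι → ℚ} (hq : ∀ i, 0 ≤ q i) :
    ∃ D : ℕ, 0 < D ∧ ∃ n : ι → ℕ, ∀ i, (n i : ℚ) = D * q i := by
  refine ⟨∏ i, (q i).den, Finset.prod_pos fun i _ => (q i).pos,
    fun i => (∏ j, (q j).den) / (q i).den * (q i).num.toNat, fun i => ?_⟩
  have hdvd : (q i).den ∣ ∏ j, (q j).den := Finset.dvd_prod_of_mem _ (Finset.mem_univ i)
  have hnum : ((q i).num.toNat : ℚ) = (q i).num := by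
    exact_mod_cast Int.toNat_of_nonneg (Rat.num_nonneg.2 (hq i))
  rw [Nat.cast_mul, Nat.cast_div hdvd (by exact_mod_cast (q i).den_nz), hnum, div_mul_eq_mul_div,
    mul_div_assoc, Rat.num_div_den]

theorem zero_mem_convexHull_of_weight_eq_zero {ι κ : Type*} (v : ι → κ → ℤ) {P : Set ι}
    {m : ι →₀ ℕ} (hm : m ≠ 0) (hmP : ↑m.support ⊆ P) (hmv : weight v m = 0) :
    (0 : κ → ℝ) ∈ convexHull ℝ ((fun s j => (s j : ℝ)) '' (v '' P)) := by
  have hpos : 0 < ∑ i ∈ m.support, (m i : ℝ) := by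
    rw [← Nat.cast_sum, ← degree_apply]
    exact_mod_cast Nat.pos_of_ne_zero ((degree_eq_zero_iff m).not.2 hm)
  have hsum : ∑ i ∈ m.support, (m i : ℝ) • (fun j => (v i j : ℝ)) = 0 := by
    funext j
    have hj := congrArg (fun a : κ → ℤ => (a j : ℝ)) hmv
    simpa [weight_apply, Finsupp.sum] using hj
  have hmem := m.support.centerMass_mem_convexHull (fun i _ => Nat.cast_nonneg (m i)) hpos
    (z := fun i j => (v i j : ℝ)) (s := (fun s j => (s j : ℝ)) '' (v '' P))
    fun i hi => ⟨v i, ⟨i, hmP hi, rfl⟩, rfl⟩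
  rwa [Finset.centerMass, hsum, smul_zero] at hmem

theorem exists_weight_eq_zero_of_zero_mem_convexHull {ι κ : Type*} (v : ι → κ → ℤ) {P : Set ι}
    (h : (0 : κ → ℝ) ∈ convexHull ℝ ((fun s j => (s j : ℝ)) '' (v '' P))) :
    ∃ m : ι →₀ ℕ, m ≠ 0 ∧ ↑m.support ⊆ P ∧ weight v m = 0 := by
  classical
  obtain ⟨ι', _, z, w, hzs, hz, hw₀, hw₁, hwz⟩ := eq_pos_convex_span_of_mem_convexHull h
  have hpick : ∀ i, ∃ i' ∈ P, (fun j => (v i' j : ℝ)) = z i := fun i => by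
    obtain ⟨_, ⟨i', hi', rfl⟩, hi'z⟩ := hzs ⟨i, rfl⟩
    exact ⟨i', hi', hi'z⟩
  choose p hpP hpz using hpick
  have hw_rat := hz.mem_range_algebraMap_of_sum_smul_eq (F := ℚ)
    (fun i j => ⟨v (p i) j, by simp [← hpz]⟩) (fun j => ⟨0, by simp⟩) hw₁ hwz
  choose q hq using hw_rat
  simp only [eq_ratCast] at hq
  obtain ⟨D, hD, n, hn⟩ := exists_nat_eq_mul_of_nonneg (q := q) fun i => by
    exact_mod_cast (hq i).symm ▸ (hw₀ i).le
  have hn' : ∀ i, (n i : ℝ) = D * w i := fun i => by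
    rw [← hq i]
    exact_mod_cast hn i
  refine ⟨∑ i, single (p i) (n i), ?_, ?_, ?_⟩
  · intro h0
    have hdeg := congrArg (fun m : ι →₀ ℕ => ((degree m : ℕ) : ℝ)) h0
    simp only [map_sum, degree_single, Nat.cast_sum, hn', ← Finset.mul_sum, hw₁, map_zero,
      Nat.cast_zero, mul_one] at hdeg
    exact hD.ne' (by exact_mod_cast hdeg)
  · intro i hi
    obtain ⟨i', -, hi'⟩ := Finset.mem_biUnion.1 (Finsupp.support_finsetSum hi)
    rw [Finset.mem_singleton.1 (support_single_subset hi')]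
    exact hpP i'
  · funext j
    have hj := congrFun hwz j
    simp only [Finset.sum_apply, Pi.smul_apply, smul_eq_mul, ← hpz, Pi.zero_apply] at hj
    apply Int.cast_injective (α := ℝ)
    simp [map_sum, weight_single, hn', mul_assoc, ← Finset.mul_sum, hj]

theorem zero_mem_convexHull_iff_exists_weight_eq_zero {ι κ : Type*} (v : ι → κ → ℤ)
    (P : Set ι) :
    (0 : κ → ℝ) ∈ convexHull ℝ ((fun s j => (s j : ℝ)) '' (v '' P)) ↔
      ∃ m : ι →₀ ℕ, m ≠ 0 ∧ ↑m.support ⊆ P ∧ weight v m = 0 :=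
  ⟨exists_weight_eq_zero_of_zero_mem_convexHull v,
    fun ⟨_, hm, hmP, hmv⟩ => zero_mem_convexHull_of_weight_eq_zero v hm hmP hmv⟩

theorem stmt5_general (k : Type*) [Field k] [Infinite k] (n r : ℕ)
    (α : Fin n → Fin r → ℤ) (x : Fin n → k) :
    (∃ f : MvPolynomial (Fin n) k, ∃ d : ℕ, 1 ≤ d ∧ f.IsHomogeneous d ∧
        (∀ t : Fin r → kˣ,
          MvPolynomial.aeval
            (fun i => (((∏ j, t j ^ α i j : kˣ) : k)) • MvPolynomial.X i) f = f) ∧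
        MvPolynomial.eval x f ≠ 0) ↔
      (0 : Fin r → ℝ) ∈
        convexHull ℝ ((fun s : Fin r → ℤ => fun j => (s j : ℝ)) '' (α '' {i | x i ≠ 0})) := by
  simp only [aeval_torus_eq_self_iff_isWeightedHomogeneous]
  rw [exists_isHomogeneous_isWeightedHomogeneous_eval_ne_zero_iff,
    zero_mem_convexHull_iff_exists_weight_eq_zero]

/-- Hilbert–Mumford criterion for semistability of a point under a diagonal torus
action: for the action of `T = (kˣ)^r` on `k[x_0,…,x_{n-1}]` with integer weight
vectors `α_i ∈ ℤ^r` and a nonzero point `x ∈ k^n`, there is a `T`-invariant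
homogeneous polynomial of degree `≥ 1` not vanishing at `x` iff `0` lies in the
convex hull in `ℝ^r` of `{α_i : x_i ≠ 0}`. -/
theorem stmt5 (k : Type*) [Field k] [Infinite k] (n r : ℕ) (hn : 1 ≤ n) (hr : 1 ≤ r)
    (α : Fin n → Fin r → ℤ) (x : Fin n → k) (hx : x ≠ 0) :
    (∃ f : MvPolynomial (Fin n) k, ∃ d : ℕ, 1 ≤ d ∧ f.IsHomogeneous d ∧
        (∀ t : Fin r → kˣ,
          MvPolynomial.aeval
            (fun i => (((∏ j, t j ^ α i j : kˣ) : k)) • MvPolynomial.X i) f = f) ∧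
        MvPolynomial.eval x f ≠ 0) ↔
      (0 : Fin r → ℝ) ∈
        convexHull ℝ ((fun s : Fin r → ℤ => fun j => (s j : ℝ)) '' (α '' {i | x i ≠ 0})) :=
  stmt5_general k n r α x
end

section
/- Let k be a field, let n, r ≥ 1, and let α_0, …, α_{n−1} ∈ ℤ^r. Then the k-subalgebra of k[x_0, …, x_{n−1}] spanned by all monomials x^β with Σ_i β_i α_i = 0 in ℤ^r is finitely generated as a k-algebra. -/
/-!
The exponents of the invariant monomials form the kernel of the weight map `ℕⁿ → ℤʳ`,
`β ↦ ∑ i, β i • α i`. The kernel of an additive map is subtractive (`x` and `x + y` in it force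
`y` in it), and by Dickson's lemma a subtractive submonoid of `ℕⁿ` is generated by its finitely
many minimal nonzero elements. The monomials with these exponents generate the invariant ring.
-/

open MvPolynomial

theorem AddMonoidHom.mker_fg {M N : Type*} [AddCommMonoid M] [PartialOrder M]
    [WellQuasiOrderedLE M] [IsOrderedCancelAddMonoid M] [CanonicallyOrderedAdd M]
    [AddZeroClass N] (f : M →+ N) : (mker f).FG :=
  AddSubmonoid.fg_of_subtractive fun x hx y hxy => by
    rw [mem_mker, map_add, hx, zero_add] at hxy
    exact hxy

namespace MvPolynomial

variable {σ R : Type*} [CommSemiring R]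

theorem adjoin_monomial_image_closure (s : Set (σ →₀ ℕ)) :
    Algebra.adjoin R ((monomial · (1 : R)) '' AddSubmonoid.closure s) =
      Algebra.adjoin R ((monomial · (1 : R)) '' s) := by
  refine le_antisymm ?_ (Algebra.adjoin_mono (Set.image_mono AddSubmonoid.subset_closure))
  rw [Algebra.adjoin_le_iff]
  rintro _ ⟨β, hβ, rfl⟩
  induction hβ using AddSubmonoid.closure_induction with
  | mem β hβ => exact Algebra.subset_adjoin (Set.mem_image_of_mem _ hβ)
  | zero => exact Subalgebra.one_mem _
  | add β γ _ _ hβ hγ =>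
    simpa only [monomial_mul, one_mul, SetLike.mem_coe] using mul_mem hβ hγ

theorem adjoin_monomial_image_fg {P : AddSubmonoid (σ →₀ ℕ)} (hP : P.FG) :
    (Algebra.adjoin R ((monomial · (1 : R)) '' (P : Set (σ →₀ ℕ)))).FG := by
  classical
  obtain ⟨s, rfl⟩ := hP
  refine ⟨s.image (monomial · 1), ?_⟩
  rw [adjoin_monomial_image_closure, Finset.coe_image]

end MvPolynomial

theorem stmt6_general (k : Type*) [Field k] (n r : ℕ)
    (α : Fin n → Fin r → ℤ) :
    (Algebra.adjoin k {f : MvPolynomial (Fin n) k |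
        ∃ β : Fin n →₀ ℕ, (∑ i, β i • α i = (0 : Fin r → ℤ)) ∧
          f = MvPolynomial.monomial β 1}).FG := by
  let weight : (Fin n →₀ ℕ) →+ (Fin r → ℤ) :=
    (Fintype.linearCombination ℕ α).toAddMonoidHom.comp Finsupp.coeFnAddHom
  have invariant_monomials : {f : MvPolynomial (Fin n) k |
      ∃ β : Fin n →₀ ℕ, (∑ i, β i • α i = (0 : Fin r → ℤ)) ∧ f = monomial β 1} =
        (monomial · 1) '' AddMonoidHom.mker weight := by
    ext f
    simp only [Set.mem_ofPred_eq, Set.mem_image, SetLike.mem_coe, AddMonoidHom.mem_mker, weight,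
      AddMonoidHom.coe_comp, Function.comp_apply, LinearMap.toAddMonoidHom_coe,
      Finsupp.coeFnAddHom_apply, Fintype.linearCombination_apply]
    exact exists_congr fun β => and_congr_right' eq_comm
  rw [invariant_monomials]
  exact adjoin_monomial_image_fg weight.mker_fg

/-- Finite generation of the invariants of a diagonal torus action: the
`k`-subalgebra of `k[x_0,…,x_{n-1}]` spanned (as a subalgebra, equivalently as the
linear span, since the set of such monomials is multiplicatively closed and
contains 1) by the monomials `x^β` of weight `∑ i, β i • α i = 0` is finitely
generated as a `k`-algebra. -/
theorem stmt6 (k : Type*) [Field k] (n r : ℕ) (hn : 1 ≤ n) (hr : 1 ≤ r)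
    (α : Fin n → Fin r → ℤ) :
    (Algebra.adjoin k {f : MvPolynomial (Fin n) k |
        ∃ β : Fin n →₀ ℕ, (∑ i, β i • α i = (0 : Fin r → ℤ)) ∧
          f = MvPolynomial.monomial β 1}).FG :=
  stmt6_general k n r α
end

section
/- Let k be a field of characteristic zero, n ≥ 1, and let N be a nilpotent n × n matrix over k. For a ∈ k set exp(aN) = Σ_{m ≥ 0} (a^m / m!) N^m, a finite sum since N is nilpotent. Then there exists a group homomorphism ρ : SL(2, k) → GL(n, k) such that for every a ∈ k, ρ applied to the upper unitriangular matrix [[1, a], [0, 1]] equals exp(aN). -/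
/-!
By the structure theorem for finitely generated torsion modules over the PID `k[X]`, the
`k[X]`-module `kⁿ` on which `X` acts by `N` is a product of blocks `k[X]/(Xᵉ)`, so it suffices
to treat multiplication by `X` on one block. For `e = d + 1` the block is identified with the
binary forms of degree `d` by `Xᵐ ↦ X₀ᵐ X₁ᵈ⁻ᵐ / (d - m)!`. Matrices act on binary forms by linear
substitution, and `[[1, a], [0, 1]]` sends `X₀ᵐ X₁ⁿ` to `X₀ᵐ (a X₀ + X₁)ⁿ`; the binomial
expansion of the latter is `exp (a X)` applied to the block, because
`(n choose j) / n! = 1 / (j! (n - j)!)`.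
-/

open scoped MatrixGroups
open Finset

noncomputable section

universe u

variable {k : Type u} [Field k]

section TruncExp

variable (k) {A B : Type*} [Ring A] [Algebra k A] [Ring B] [Algebra k B]

def truncExp (x : A) (K : ℕ) : A :=
  ∑ m ∈ range K, (m.factorial : k)⁻¹ • x ^ m

variable {k}

lemma truncExp_eq_of_le {x : A} {K L : ℕ} (hK : x ^ K = 0) (h : K ≤ L) :
    truncExp k x L = truncExp k x K := by
  refine (sum_subset (range_subset_range.2 h) fun m _ hm => ?_).symm
  rw [pow_eq_zero_of_le (not_lt.1 (mem_range.not.1 hm)) hK, smul_zero]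

lemma truncExp_eq_truncExp {x : A} {K L : ℕ} (hK : x ^ K = 0) (hL : x ^ L = 0) :
    truncExp k x K = truncExp k x L := by
  rcases le_total K L with h | h
  · exact (truncExp_eq_of_le hK h).symm
  · exact truncExp_eq_of_le hL h

lemma AlgHom.map_truncExp (φ : A →ₐ[k] B) (x : A) (K : ℕ) :
    φ (truncExp k x K) = truncExp k (φ x) K := by
  simp only [truncExp, map_sum, map_smul, map_pow]

lemma Pi.truncExp_apply {ι : Type*} {A : ι → Type*} [∀ i, Ring (A i)] [∀ i, Algebra k (A i)]
    (x : ∀ i, A i) (K : ℕ) (i : ι) : truncExp k x K i = truncExp k (x i) K := by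
  simp only [truncExp, Finset.sum_apply, Pi.smul_apply, Pi.pow_apply]

end TruncExp

def IsSL2Extension {A : Type*} [Ring A] [Algebra k A] (ρ : SL(2, k) →* Aˣ) (x : A) : Prop :=
  ∀ a : k, ∀ g : SL(2, k), (g : Matrix (Fin 2) (Fin 2) k) = !![1, a; 0, 1] →
    ∀ K : ℕ, x ^ K = 0 → (ρ g : A) = truncExp k (a • x) K

lemma IsSL2Extension.map {A B : Type*} [Ring A] [Algebra k A] [Ring B] [Algebra k B]
    {ρ : SL(2, k) →* Aˣ} {x : A} (h : IsSL2Extension ρ x) (φ : A →ₐ[k] B)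
    (hφ : Function.Injective φ) :
    IsSL2Extension ((Units.map (φ : A →* B)).comp ρ) (φ x) := by
  intro a g hg K hK
  have hxK : x ^ K = 0 := hφ (by rw [map_pow, hK, map_zero])
  simp [h a g hg K hxK, AlgHom.map_truncExp, map_smul]

lemma IsSL2Extension.pi {ι : Type*} {A : ι → Type*} [∀ i, Ring (A i)] [∀ i, Algebra k (A i)]
    {ρ : ∀ i, SL(2, k) →* (A i)ˣ} {x : ∀ i, A i} (h : ∀ i, IsSL2Extension (ρ i) (x i)) :
    IsSL2Extension (MulEquiv.piUnits.symm.toMonoidHom.comp (MonoidHom.pi ρ)) x := by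
  intro a g hg K hK
  funext i
  rw [Pi.truncExp_apply]
  exact h i a g hg K (by rw [← Pi.pow_apply, hK, Pi.zero_apply])

section PiEnd

variable (k) {ι : Type*} (V : ι → Type*) [∀ i, AddCommGroup (V i)] [∀ i, Module k (V i)]

def LinearMap.piMapAlgHom : (∀ i, Module.End k (V i)) →ₐ[k] Module.End k (∀ i, V i) where
  toFun := LinearMap.piMap
  map_one' := rfl
  map_mul' _ _ := rfl
  map_zero' := rfl
  map_add' _ _ := rfl
  commutes' _ := rfl

lemma LinearMap.piMapAlgHom_injective : Function.Injective (LinearMap.piMapAlgHom k V) := by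
  classical
  intro f g (hfg : piMap f = piMap g)
  funext i
  ext v
  simpa using congr($hfg (Pi.single i v) i)

end PiEnd

open Polynomial

section QuotXPow

variable (k) in
abbrev QuotXPow (e : ℕ) : Type u := k[X] ⧸ Submodule.span k[X] {(X : k[X]) ^ e}

variable (k) in
def mulX (e : ℕ) : Module.End k (QuotXPow k e) :=
  (LinearMap.lsmul k[X] (QuotXPow k e) X).restrictScalars k

variable {e : ℕ}

lemma mulX_pow_apply (j : ℕ) (q : QuotXPow k e) : (mulX k e ^ j) q = (X ^ j : k[X]) • q := by
  induction j with
  | zero => simp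
  | succ j ih => rw [pow_succ', Module.End.mul_apply, ih, pow_succ', mul_smul]; rfl

lemma mk_X_pow_eq_zero {m : ℕ} (h : e ≤ m) :
    (Submodule.Quotient.mk (X ^ m) : QuotXPow k e) = 0 := by
  rw [Submodule.Quotient.mk_eq_zero, Submodule.mem_span_singleton]
  exact ⟨X ^ (m - e), by rw [smul_eq_mul, ← pow_add, Nat.sub_add_cancel h]⟩

lemma mulX_pow_mk (j m : ℕ) :
    (mulX k e ^ j) (Submodule.Quotient.mk (X ^ m)) =
      (Submodule.Quotient.mk (X ^ (m + j)) : QuotXPow k e) := by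
  rw [mulX_pow_apply, ← Submodule.Quotient.mk_smul, smul_eq_mul, ← pow_add, add_comm]

lemma mulX_pow_self : mulX k e ^ e = 0 := by
  refine LinearMap.ext fun q => ?_
  obtain ⟨p, rfl⟩ := Submodule.Quotient.mk_surjective _ q
  rw [mulX_pow_apply, ← Submodule.Quotient.mk_smul, LinearMap.zero_apply,
    Submodule.Quotient.mk_eq_zero]
  exact Submodule.mem_span_singleton.2 ⟨p, by rw [smul_eq_mul, smul_eq_mul, mul_comm]⟩

lemma QuotXPow.linearMap_ext {W : Type*} [AddCommGroup W] [Module k W]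
    {f g : QuotXPow k e →ₗ[k] W}
    (h : ∀ m : ℕ, f (Submodule.Quotient.mk (X ^ m)) = g (Submodule.Quotient.mk (X ^ m))) :
    f = g := by
  let π := ((Submodule.span k[X] {(X : k[X]) ^ e}).mkQ).restrictScalars k
  have hπ : f ∘ₗ π = g ∘ₗ π :=
    (basisMonomials k).ext fun m => by simpa [π, ← monomial_one_right_eq_X_pow] using h m
  refine LinearMap.ext fun q => ?_
  obtain ⟨p, rfl⟩ := Submodule.Quotient.mk_surjective _ q
  exact LinearMap.congr_fun hπ p

lemma truncExp_smul_mulX_mk (a : k) (e K m : ℕ) :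
    truncExp k (a • mulX k e) K (Submodule.Quotient.mk (X ^ m)) =
      ∑ j ∈ range K, ((j.factorial : k)⁻¹ * a ^ j) • Submodule.Quotient.mk (X ^ (m + j)) := by
  simp only [truncExp, LinearMap.sum_apply, LinearMap.smul_apply, _root_.smul_pow,
    mulX_pow_mk, smul_smul]

end QuotXPow

theorem Module.End.exists_linearEquiv_pi_quotXPow {V : Type*} [AddCommGroup V] [Module k V]
    [FiniteDimensional k V] (f : Module.End k V) (hf : IsNilpotent f) :
    ∃ (ι : Type u) (_ : Fintype ι) (e : ι → ℕ) (E : V ≃ₗ[k] ∀ i, QuotXPow k (e i)),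
      E.conjAlgEquiv k f = LinearMap.piMap fun i => mulX k (e i) := by
  obtain ⟨K, hK⟩ := hf
  have hXK : (X ^ K : k[X]) ∈ Module.annihilator k[X] (Module.AEval' f) := by
    refine Module.mem_annihilator.2 fun v => ?_
    obtain ⟨w, rfl⟩ := (Module.AEval'.of f).surjective v
    rw [Module.AEval'.X_pow_smul_of, hK, zero_smul, map_zero]
  have htors : Module.IsTorsion k[X] (Module.AEval' f) :=
    Module.AEval.isTorsion_of_aeval_eq_zero (p := X ^ K) (by simp [hK]) (pow_ne_zero _ X_ne_zero)
  obtain ⟨ι, _, p, -, e, ⟨E⟩⟩ := Module.equiv_directSum_of_isTorsion htors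
  have hspan (i : ι) : ∃ j, Submodule.span k[X] {p i ^ e i} = Submodule.span k[X] {X ^ j} := by
    simp_rw [E.annihilator_eq, DirectSum, Module.annihilator_dfinsupp, Submodule.mem_iInf] at hXK
    have hdvd : p i ^ e i ∣ X ^ K := by
      simpa [Ideal.annihilator_quotient, Ideal.mem_span_singleton] using hXK i
    obtain ⟨j, -, hj⟩ := (dvd_prime_pow prime_X K).1 hdvd
    exact ⟨j, Ideal.span_singleton_eq_span_singleton.2 hj⟩
  choose j hj using hspan
  let E' : Module.AEval' f ≃ₗ[k[X]] ∀ i, QuotXPow k (j i) :=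
    (E.trans (DFinsupp.mapRange.linearEquiv fun i => Submodule.quotEquivOfEq _ _ (hj i))).trans
      (DirectSum.linearEquivFunOnFintype k[X] ι _)
  let Eall : V ≃ₗ[k] ∀ i, QuotXPow k (j i) := (Module.AEval'.of f).trans (E'.restrictScalars k)
  refine ⟨ι, inferInstance, j, Eall, LinearMap.ext fun w => ?_⟩
  obtain ⟨v, rfl⟩ := Eall.surjective w
  rw [LinearEquiv.conjAlgEquiv_apply, LinearMap.comp_apply, LinearMap.comp_apply,
    LinearEquiv.coe_coe, LinearEquiv.coe_coe, Eall.symm_apply_apply]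
  change E' (Module.AEval'.of f (f v)) = (X : k[X]) • E' (Module.AEval'.of f v)
  rw [← Module.AEval'.X_smul_of, map_smul]

section LinearSubst

open MvPolynomial

variable (k) (σ : Type*) [Fintype σ] [DecidableEq σ]

def linearSubst : Matrix σ σ k →* (MvPolynomial σ k →ₐ[k] MvPolynomial σ k) where
  toFun M := aeval fun i => ∑ j, M j i • X j
  map_one' := algHom_ext fun i => by simp [Matrix.one_apply]
  map_mul' M N := algHom_ext fun i => by
    simp only [MvPolynomial.aeval_X, AlgHom.mul_apply, map_sum, map_smul, Matrix.mul_apply,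
      sum_smul, smul_sum, smul_smul]
    rw [sum_comm]
    simp only [mul_comm]

variable {σ} in
lemma linearSubst_mem_homogeneousSubmodule (M : Matrix σ σ k) {d : ℕ} {p : MvPolynomial σ k}
    (hp : p ∈ homogeneousSubmodule σ k d) :
    linearSubst k σ M p ∈ homogeneousSubmodule σ k d := by
  have hX (i : σ) : (∑ j, M j i • X j : MvPolynomial σ k) ∈ homogeneousSubmodule σ k 1 :=
    Submodule.sum_mem _ fun j _ => Submodule.smul_mem _ _ (isHomogeneous_X k j)
  simpa [linearSubst] using ((mem_homogeneousSubmodule d p).1 hp).aeval _ hX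

def homogeneousRep (d : ℕ) : Matrix σ σ k →* Module.End k (homogeneousSubmodule σ k d) where
  toFun M := (AlgHom.toEnd (linearSubst k σ M)).restrict
    fun _ => linearSubst_mem_homogeneousSubmodule k M
  map_one' := by ext; simp
  map_mul' _ _ := by ext; simp

end LinearSubst

section Binary

open MvPolynomial (monomial homogeneousSubmodule)

def binomExp (d m : ℕ) : Fin 2 →₀ ℕ := Finsupp.single 0 m + Finsupp.single 1 (d - m)

variable (k) in
def binomMonomial (d m : ℕ) : MvPolynomial (Fin 2) k := monomial (binomExp d m) 1

lemma binomMonomial_eq (d m : ℕ) :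
    binomMonomial k d m = MvPolynomial.X 0 ^ m * MvPolynomial.X 1 ^ (d - m) := by
  rw [MvPolynomial.X_pow_eq_monomial, MvPolynomial.X_pow_eq_monomial,
    MvPolynomial.monomial_mul, one_mul]
  rfl

lemma exists_eq_binomExp {d : ℕ} {s : Fin 2 →₀ ℕ} (hs : s.degree = d) :
    ∃ m ≤ d, s = binomExp d m := by
  rw [Finsupp.degree_eq_sum, Fin.sum_univ_two] at hs
  refine ⟨s 0, by omega, Finsupp.ext fun i => ?_⟩
  fin_cases i <;> simp [binomExp, ← hs]

lemma degree_binomExp {d m : ℕ} (hm : m ≤ d) : (binomExp d m).degree = d := by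
  rw [Finsupp.degree_eq_sum, Fin.sum_univ_two]
  simp [binomExp]
  omega

lemma binomMonomial_mem {d m : ℕ} (hm : m ≤ d) :
    binomMonomial k d m ∈ homogeneousSubmodule (Fin 2) k d :=
  MvPolynomial.isHomogeneous_monomial _ (degree_binomExp hm)

lemma coeff_binomMonomial (d m m' : ℕ) :
    (binomMonomial k d m).coeff (binomExp d m') = if m' = m then 1 else 0 := by
  rw [binomMonomial, MvPolynomial.coeff_monomial]
  refine if_congr ⟨fun h => ?_, fun h => h ▸ rfl⟩ rfl rfl
  simpa [binomExp] using congr($h 0).symm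

variable (k) in
def toHomogeneousAux (d : ℕ) : k[X] →ₗ[k] MvPolynomial (Fin 2) k where
  toFun p := ∑ m ∈ range (d + 1), (p.coeff m * ((d - m).factorial : k)⁻¹) • binomMonomial k d m
  map_add' p q := by simp only [coeff_add, add_mul, add_smul, sum_add_distrib]
  map_smul' c p := by simp only [coeff_smul, smul_eq_mul, mul_assoc, smul_sum, mul_smul,
    RingHom.id_apply]

lemma toHomogeneousAux_apply (d : ℕ) (p : k[X]) : toHomogeneousAux k d p =
    ∑ m ∈ range (d + 1), (p.coeff m * ((d - m).factorial : k)⁻¹) • binomMonomial k d m :=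
  rfl

lemma toHomogeneousAux_mul_X_pow (d : ℕ) (p : k[X]) :
    toHomogeneousAux k d (p * X ^ (d + 1)) = 0 := by
  rw [toHomogeneousAux_apply]
  refine Finset.sum_eq_zero fun m hm => ?_
  rw [coeff_mul_X_pow', if_neg (by simpa using hm), zero_mul, zero_smul]

variable (k) in
def toHomogeneous (d : ℕ) : QuotXPow k (d + 1) →ₗ[k] MvPolynomial (Fin 2) k :=
  ((Submodule.span k[X] {(X : k[X]) ^ (d + 1)}).restrictScalars k).liftQ (toHomogeneousAux k d)
    (fun p hp => by
      obtain ⟨c, rfl⟩ := Submodule.mem_span_singleton.1 hp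
      exact toHomogeneousAux_mul_X_pow d c) ∘ₗ
    (Submodule.Quotient.restrictScalarsEquiv k _).symm.toLinearMap

lemma toHomogeneous_mk (d : ℕ) (p : k[X]) :
    toHomogeneous k d (Submodule.Quotient.mk p) = toHomogeneousAux k d p :=
  rfl

lemma toHomogeneous_mk_X_pow {d m : ℕ} (hm : m ≤ d) :
    toHomogeneous k d (Submodule.Quotient.mk (X ^ m)) =
      ((d - m).factorial : k)⁻¹ • binomMonomial k d m := by
  rw [toHomogeneous_mk, toHomogeneousAux_apply,
    Finset.sum_eq_single_of_mem m (mem_range.2 (Nat.lt_succ_of_le hm))]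
  · simp
  · intro m' _ hm'
    simp [coeff_X_pow, hm']

lemma toHomogeneous_mem (d : ℕ) (q : QuotXPow k (d + 1)) :
    toHomogeneous k d q ∈ homogeneousSubmodule (Fin 2) k d := by
  obtain ⟨p, rfl⟩ := Submodule.Quotient.mk_surjective _ q
  rw [toHomogeneous_mk, toHomogeneousAux_apply]
  exact Submodule.sum_mem _ fun m hm =>
    Submodule.smul_mem _ _ (binomMonomial_mem (Nat.le_of_lt_succ (mem_range.1 hm)))

variable (k) in
def ofHomogeneous (d : ℕ) : MvPolynomial (Fin 2) k →ₗ[k] QuotXPow k (d + 1) where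
  toFun p := ∑ m ∈ range (d + 1), (p.coeff (binomExp d m) * (d - m).factorial) •
    Submodule.Quotient.mk (X ^ m)
  map_add' p q := by simp only [MvPolynomial.coeff_add, add_mul, add_smul, sum_add_distrib]
  map_smul' c p := by simp only [MvPolynomial.coeff_smul, smul_eq_mul, mul_assoc, smul_sum,
    mul_smul, RingHom.id_apply]

lemma ofHomogeneous_apply (d : ℕ) (p : MvPolynomial (Fin 2) k) : ofHomogeneous k d p =
    ∑ m ∈ range (d + 1), (p.coeff (binomExp d m) * (d - m).factorial) •
      Submodule.Quotient.mk (X ^ m) :=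
  rfl

lemma ofHomogeneous_binomMonomial {d m : ℕ} (hm : m ≤ d) :
    ofHomogeneous k d (binomMonomial k d m) =
      ((d - m).factorial : k) • Submodule.Quotient.mk (X ^ m) := by
  rw [ofHomogeneous_apply, Finset.sum_eq_single_of_mem m (mem_range.2 (Nat.lt_succ_of_le hm))]
  · simp [coeff_binomMonomial]
  · intro m' _ hm'
    simp [coeff_binomMonomial, hm']

lemma sum_coeff_binomExp_smul_binomMonomial {d : ℕ} {p : MvPolynomial (Fin 2) k}
    (hp : p ∈ homogeneousSubmodule (Fin 2) k d) :
    ∑ m ∈ range (d + 1), p.coeff (binomExp d m) • binomMonomial k d m = p := by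
  ext s
  simp only [MvPolynomial.coeff_sum, MvPolynomial.coeff_smul, smul_eq_mul]
  by_cases hs : s.degree = d
  · obtain ⟨m, hm, rfl⟩ := exists_eq_binomExp hs
    simp [coeff_binomMonomial, Nat.lt_succ_of_le hm]
  · rw [(MvPolynomial.mem_homogeneousSubmodule d p).1 hp |>.coeff_eq_zero hs]
    refine Finset.sum_eq_zero fun m hm => ?_
    rw [binomMonomial, MvPolynomial.coeff_monomial, if_neg, mul_zero]
    rintro rfl
    exact hs (degree_binomExp (Nat.le_of_lt_succ (mem_range.1 hm)))

lemma linearSubst_unipotent_binomMonomial (a : k) (d m : ℕ) :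
    linearSubst k (Fin 2) !![1, a; 0, 1] (binomMonomial k d m) =
      ∑ j ∈ range (d - m + 1), (a ^ j * (d - m).choose j) • binomMonomial k d (m + j) := by
  have hX : linearSubst k (Fin 2) !![1, a; 0, 1] (binomMonomial k d m) =
      MvPolynomial.X 0 ^ m * (a • MvPolynomial.X 0 + MvPolynomial.X 1) ^ (d - m) := by
    simp [linearSubst, binomMonomial_eq, Fin.sum_univ_two]
  rw [hX, add_pow, mul_sum]
  refine sum_congr rfl fun j hj => ?_
  rw [binomMonomial_eq, show d - (m + j) = d - m - j by omega]
  simp only [MvPolynomial.smul_eq_C_mul, map_mul, map_pow, map_natCast, mul_pow]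
  ring

variable [CharZero k]

lemma ofHomogeneous_comp_toHomogeneous (d : ℕ) :
    ofHomogeneous k d ∘ₗ toHomogeneous k d = LinearMap.id := by
  refine QuotXPow.linearMap_ext fun m => ?_
  rcases le_or_gt m d with hm | hm
  · rw [LinearMap.comp_apply, toHomogeneous_mk_X_pow hm, map_smul,
      ofHomogeneous_binomMonomial hm, smul_smul,
      inv_mul_cancel₀ (Nat.cast_ne_zero.2 (Nat.factorial_ne_zero _)), one_smul, LinearMap.id_apply]
  · rw [mk_X_pow_eq_zero hm, map_zero, map_zero]

lemma toHomogeneous_ofHomogeneous {d : ℕ} {p : MvPolynomial (Fin 2) k}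
    (hp : p ∈ homogeneousSubmodule (Fin 2) k d) :
    toHomogeneous k d (ofHomogeneous k d p) = p := by
  conv_rhs => rw [← sum_coeff_binomExp_smul_binomMonomial hp]
  rw [ofHomogeneous_apply, map_sum]
  refine Finset.sum_congr rfl fun m hm => ?_
  rw [map_smul, toHomogeneous_mk_X_pow (Nat.le_of_lt_succ (mem_range.1 hm)), smul_smul,
    mul_assoc, mul_inv_cancel₀ (Nat.cast_ne_zero.2 (Nat.factorial_ne_zero _)), mul_one]

variable (k) in
def quotXPowEquivHomogeneous (d : ℕ) :
    QuotXPow k (d + 1) ≃ₗ[k] homogeneousSubmodule (Fin 2) k d :=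
  LinearEquiv.ofLinearMap ((toHomogeneous k d).codRestrict _ (toHomogeneous_mem d))
    (ofHomogeneous k d ∘ₗ (homogeneousSubmodule (Fin 2) k d).subtype)
    (LinearMap.ext fun p => Subtype.ext (toHomogeneous_ofHomogeneous p.2))
    (ofHomogeneous_comp_toHomogeneous d)

lemma homogeneousRep_unipotent (d : ℕ) (a : k) :
    (quotXPowEquivHomogeneous k d).symm.conjAlgEquiv k
        (homogeneousRep k (Fin 2) d !![1, a; 0, 1]) =
      truncExp k (a • mulX k (d + 1)) (d + 1) := by
  set E := quotXPowEquivHomogeneous k d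
  rw [LinearEquiv.conjAlgEquiv_apply, LinearEquiv.symm_symm]
  refine QuotXPow.linearMap_ext fun m => E.injective (Subtype.ext ?_)
  simp only [LinearMap.comp_apply, LinearEquiv.coe_coe, LinearEquiv.apply_symm_apply]
  change linearSubst k (Fin 2) _ (toHomogeneous k d (Submodule.Quotient.mk (X ^ m))) =
    toHomogeneous k d (truncExp k (a • mulX k (d + 1)) (d + 1) (Submodule.Quotient.mk (X ^ m)))
  rw [truncExp_smul_mulX_mk, map_sum]
  rcases le_or_gt m d with hm | hm
  · rw [toHomogeneous_mk_X_pow hm, map_smul, linearSubst_unipotent_binomMonomial, smul_sum,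
      ← sum_subset (range_subset_range.2 (show d - m + 1 ≤ d + 1 by omega))]
    · refine sum_congr rfl fun j hj => ?_
      have hj : j ≤ d - m := Nat.le_of_lt_succ (mem_range.1 hj)
      rw [map_smul, toHomogeneous_mk_X_pow (by omega), smul_smul, smul_smul,
        Nat.cast_choose k hj, show d - (m + j) = d - m - j by omega]
      have : ((d - m).factorial : k) ≠ 0 := Nat.cast_ne_zero.2 (Nat.factorial_ne_zero _)
      congr 1
      field_simp
    · intro j _ hj
      rw [mem_range, not_lt] at hj
      rw [mk_X_pow_eq_zero (by omega), smul_zero, map_zero]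
  · rw [mk_X_pow_eq_zero hm, map_zero, map_zero]
    exact (sum_eq_zero fun j _ => by rw [mk_X_pow_eq_zero (by omega), smul_zero, map_zero]).symm

end Binary

theorem exists_isSL2Extension_mulX [CharZero k] (e : ℕ) :
    ∃ ρ : SL(2, k) →* (Module.End k (QuotXPow k e))ˣ, IsSL2Extension ρ (mulX k e) := by
  cases e with
  | zero =>
    have : Subsingleton (QuotXPow k 0) :=
      Submodule.Quotient.subsingleton_iff.2 (by simp)
    exact ⟨1, fun _ _ _ _ _ => Subsingleton.elim _ _⟩
  | succ d =>
    let E := quotXPowEquivHomogeneous k d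
    refine ⟨(Units.map ((E.symm.conjAlgEquiv k : _ →* _).comp (homogeneousRep k (Fin 2) d))).comp
      Matrix.SpecialLinearGroup.toGL, fun a g hg K hK => ?_⟩
    rw [truncExp_eq_truncExp (by rw [_root_.smul_pow, hK, smul_zero])
      (by rw [_root_.smul_pow, mulX_pow_self, smul_zero]), ← homogeneousRep_unipotent, ← hg]
    rfl

end

theorem stmt9_general (k : Type*) [Field k] [CharZero k] (n : ℕ)
    (N : Matrix (Fin n) (Fin n) k) (hN : IsNilpotent N) :
    ∃ ρ : Matrix.SpecialLinearGroup (Fin 2) k →* GL (Fin n) k,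
      ∀ a : k, ∀ g : Matrix.SpecialLinearGroup (Fin 2) k,
        (g : Matrix (Fin 2) (Fin 2) k) = !![1, a; 0, 1] →
          ∀ K : ℕ, N ^ K = 0 →
            ((ρ g : GL (Fin n) k) : Matrix (Fin n) (Fin n) k) =
              ∑ m ∈ Finset.range K, (a ^ m / (Nat.factorial m : k)) • N ^ m := by
  obtain ⟨ι, _, e, E, hE⟩ :=
    Module.End.exists_linearEquiv_pi_quotXPow (Matrix.toLin' N) (hN.map Matrix.toLinAlgEquiv')
  choose ρ hρ using fun i => exists_isSL2Extension_mulX (k := k) (e i)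
  let φ : (∀ i, Module.End k (QuotXPow k (e i))) →ₐ[k] Matrix (Fin n) (Fin n) k :=
    Matrix.toLinAlgEquiv'.symm.toAlgHom.comp
      ((E.symm.conjAlgEquiv k).toAlgHom.comp (LinearMap.piMapAlgHom k _))
  have hφ : Function.Injective φ := Matrix.toLinAlgEquiv'.symm.injective.comp
    ((E.symm.conjAlgEquiv k).injective.comp (LinearMap.piMapAlgHom_injective k _))
  have hφN : φ (fun i => mulX k (e i)) = N := by
    change Matrix.toLinAlgEquiv'.symm (E.symm.conjAlgEquiv k (LinearMap.piMap _)) = N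
    rw [← hE, ← LinearEquiv.symm_conjAlgEquiv, AlgEquiv.symm_apply_apply]
    exact Matrix.toLinAlgEquiv'.symm_apply_apply N
  have hρN := hφN ▸ (IsSL2Extension.pi hρ).map φ hφ
  refine ⟨_, fun a g hg K hK => (hρN a g hg K hK).trans ?_⟩
  simp only [truncExp, _root_.smul_pow, smul_smul, div_eq_inv_mul]

/-- Any linear action of the additive group `G_a = (k,+)` on `k^n`, given by
`a ↦ exp(aN)` for a nilpotent matrix `N`, extends to a representation of
`SL(2,k)`: there is a homomorphism `ρ : SL(2,k) → GL(n,k)` sending the upper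
unitriangular matrix `[[1,a],[0,1]]` to `exp(aN) = ∑_{m<K} (a^m/m!) • N^m`
(a finite sum: the truncated sum is independent of `K` once `N^K = 0`). -/
theorem stmt9 (k : Type*) [Field k] [CharZero k] (n : ℕ) (hn : 1 ≤ n)
    (N : Matrix (Fin n) (Fin n) k) (hN : IsNilpotent N) :
    ∃ ρ : Matrix.SpecialLinearGroup (Fin 2) k →* GL (Fin n) k,
      ∀ a : k, ∀ g : Matrix.SpecialLinearGroup (Fin 2) k,
        (g : Matrix (Fin 2) (Fin 2) k) = !![1, a; 0, 1] →
          ∀ K : ℕ, N ^ K = 0 →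
            ((ρ g : GL (Fin n) k) : Matrix (Fin n) (Fin n) k) =
              ∑ m ∈ Finset.range K, (a ^ m / (Nat.factorial m : k)) • N ^ m :=
  stmt9_general k n N hN
end
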